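/- Let K be a field, write ⟨u,v⟩ = u₁v₂ − u₂v₁ for u, v ∈ K². Let m ≥ 2, v₁, …, v_m ∈ K² with ⟨v_i, v_{i+1}⟩ ≠ 0 for all i (indices cyclic, v_{m+1} = v₁), let 1 ≤ a < c ≤ m, and let x ∈ K² with ⟨v_j, x⟩ ≠ 0 for all a ≤ j ≤ c. Set D = Π_{i=1}^{m} ⟨v_i, v_{i+1}⟩ and, for a ≤ j ≤ c−1, let PT_j = D·⟨v_j, x⟩·⟨x, v_{j+1}⟩/⟨v_j, v_{j+1}⟩ be the planar Parke–Taylor denominator of the cycle (v₁, …, v_j, x, v_{j+1}, …, v_m). Then the nonplanar MHV integrand satisfies ⟨v_a, v_c⟩ / (⟨v_a, x⟩·⟨x, v_c⟩·D) = Σ_{j=a}^{c−1} 1/PT_j, i.e., it is the sum of the reciprocals of the planar Parke–Taylor denominators with x inserted in each position between a and c. -/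

import Mathlib

/-!
The soft factor `S(p, x, q) = ⟨p q⟩ / (⟨p x⟩⟨x q⟩)` is additive along a chain:
`S(p, x, q) + S(q, x, r) = S(p, x, r)` as soon as `⟨p x⟩, ⟨q x⟩, ⟨r x⟩ ≠ 0`, which after clearing
denominators is the Schouten identity. Hence `S(v_a, x, v_c)` telescopes into
`∑_{a ≤ j < c} S(v_j, x, v_{j+1})`, and the `j`-th summand divided by `D` is exactly `1 / PT_j`.
-/

namespace ParkeTaylor

variable {K : Type*} [Field K]

def angle (p q : Fin 2 → K) : K := p 0 * q 1 - p 1 * q 0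

@[simp]
theorem angle_self (p : Fin 2 → K) : angle p p = 0 := by
  unfold angle; ring

theorem angle_swap (p q : Fin 2 → K) : angle q p = -angle p q := by
  unfold angle; ring

theorem angle_schouten (p q r x : Fin 2 → K) :
    angle p q * angle r x + angle q r * angle p x = angle p r * angle q x := by
  unfold angle; ring

def softFactor (p x q : Fin 2 → K) : K := angle p q / (angle p x * angle x q)

theorem softFactor_add {p q r x : Fin 2 → K} (hp : angle p x ≠ 0) (hq : angle q x ≠ 0)
    (hr : angle r x ≠ 0) : softFactor p x q + softFactor q x r = softFactor p x r := by
  unfold softFactor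
  rw [angle_swap q x, angle_swap r x]
  field_simp
  linear_combination -angle_schouten p q r x

theorem sum_Ico_softFactor (v : ℕ → Fin 2 → K) (x : Fin 2 → K) {a c : ℕ} (hac : a ≤ c)
    (hvx : ∀ j, a ≤ j → j ≤ c → angle (v j) x ≠ 0) :
    ∑ j ∈ Finset.Ico a c, softFactor (v j) x (v (j + 1)) = softFactor (v a) x (v c) := by
  induction c, hac using Nat.le_induction with
  | base => simp [softFactor]
  | succ c hac ih =>
    rw [Finset.sum_Ico_succ_top hac, ih fun j h₁ h₂ => hvx j h₁ (by omega)]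
    exact softFactor_add (hvx a le_rfl (by omega)) (hvx c hac (by omega))
      (hvx (c + 1) (by omega) le_rfl)

end ParkeTaylor

open ParkeTaylor in
theorem nonplanar_MHV_to_planar_sum_general {K : Type*} [Field K] (m : ℕ)
    (v : ℕ → Fin 2 → K) (x : Fin 2 → K)
    (a c : ℕ) (hac : a < c)
    (hvx : ∀ j : ℕ, a ≤ j → j ≤ c → v j 0 * x 1 - v j 1 * x 0 ≠ 0) :
    let br : (Fin 2 → K) → (Fin 2 → K) → K :=
      fun p q => p 0 * q 1 - p 1 * q 0
    let D : K := ∏ i ∈ Finset.Icc 1 m, br (v i) (v (i + 1))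
    let PT : ℕ → K :=
      fun j => D * br (v j) x * br x (v (j + 1)) / br (v j) (v (j + 1))
    br (v a) (v c) / (br (v a) x * br x (v c) * D)
      = ∑ j ∈ Finset.Ico a c, (PT j)⁻¹ := by
  intro br D PT
  have hPT (j : ℕ) : (PT j)⁻¹ = softFactor (v j) x (v (j + 1)) * D⁻¹ := by
    change (D * angle (v j) x * angle x (v (j + 1)) / angle (v j) (v (j + 1)))⁻¹ = _
    rw [inv_div, softFactor]; ring
  change angle (v a) (v c) / (angle (v a) x * angle x (v c) * D) = _
  rw [Finset.sum_congr rfl fun j _ => hPT j, ← Finset.sum_mul, sum_Ico_softFactor v x hac.le hvx,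
    softFactor]
  ring

/-- Nonplanar MHV top-form integrand as a sum of planar Parke–Taylor
integrands: inserting `x` nonadjacently between positions `a` and `c` of a
cycle gives the sum of the reciprocals of the planar Parke–Taylor
denominators with `x` inserted at each intermediate position. -/
theorem nonplanar_MHV_to_planar_sum {K : Type*} [Field K] (m : ℕ) (hm : 2 ≤ m)
    (v : ℕ → Fin 2 → K) (x : Fin 2 → K)
    (hcyc : v (m + 1) = v 1)
    (hden : ∀ i ∈ Finset.Icc 1 m,
      v i 0 * v (i + 1) 1 - v i 1 * v (i + 1) 0 ≠ 0)
    (a c : ℕ) (ha : 1 ≤ a) (hac : a < c) (hc : c ≤ m)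
    (hvx : ∀ j : ℕ, a ≤ j → j ≤ c → v j 0 * x 1 - v j 1 * x 0 ≠ 0) :
    let br : (Fin 2 → K) → (Fin 2 → K) → K :=
      fun p q => p 0 * q 1 - p 1 * q 0
    let D : K := ∏ i ∈ Finset.Icc 1 m, br (v i) (v (i + 1))
    let PT : ℕ → K :=
      fun j => D * br (v j) x * br x (v (j + 1)) / br (v j) (v (j + 1))
    br (v a) (v c) / (br (v a) x * br x (v c) * D)
      = ∑ j ∈ Finset.Ico a c, (PT j)⁻¹ :=
  nonplanar_MHV_to_planar_sum_general m v x a c hac hvx
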